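/- Let Z be a standard normal random variable, η > 0, c_η = (1/2)·log((1+η)/η), and define h_{2,η}(a) = E[exp(−(a + c_η − Z²/(2(1+η)))_+)]. Then for all a > 0, h_{2,η}(a) = e^{−a}·(2Φ(√(2η(a + c_η))) − 1) + 2·(1 − Φ(√(2(1+η)(a + c_η)))). -/

import Mathlib

open MeasureTheory ProbabilityTheory Real

/-- The standard normal cumulative distribution function. -/
noncomputable def stdPhi (x : ℝ) : ℝ := ((gaussianReal 0 1) (Set.Iic x)).toReal

/-- `c_η = (1/2)·log((1+η)/η)`. -/
noncomputable def cEta (η : ℝ) : ℝ := (1/2) * Real.log ((1+η)/η)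

/-- `h_{2,η}(a) = E[exp(−(a + c_η − Z²/(2(1+η)))_+)]` for `Z` standard normal. -/
noncomputable def h2 (η a : ℝ) : ℝ :=
  ∫ z, Real.exp (-(max (a + cEta η - z^2/(2*(1+η))) 0)) ∂(gaussianReal 0 1)

/-!
Put `b = a + c_η` and `t = √(2(1+η)b)`. For `|Z| ≥ t` the integrand is `1`, which contributes
`P(|Z| ≥ t) = 2(1 - Φ(t))`. For `|Z| < t` it is `e^{-b} e^{Z²/(2(1+η))}`, and tilting the standard
Gaussian density by `e^{z²(1 - 1/v)/2}` gives `√v` times the `N(0, v)` density, here with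
`v = (1+η)/η`. So this part equals `e^{-b} √v P(|√v Z| < t) = e^{-b} √v (2Φ(t/√v) - 1)`, where
`t/√v = √(2ηb)` and `e^{-c_η} √v = 1`.
-/

open scoped NNReal

lemma gaussianReal_std_Iic_neg (x : ℝ) :
    gaussianReal 0 1 (Set.Iic (-x)) = gaussianReal 0 1 (Set.Ici x) := by
  have hsymm : (gaussianReal 0 1).map (fun z ↦ -z) = gaussianReal 0 1 := by
    simpa using gaussianReal_map_neg (μ := 0) (v := 1)
  conv_lhs => rw [← hsymm, Measure.map_apply measurable_neg measurableSet_Iic]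
  congr 1
  ext z
  simp

lemma measureReal_gaussianReal_std_Ici (x : ℝ) :
    (gaussianReal 0 1).real (Set.Ici x) = 1 - stdPhi x := by
  have := nullSingletonClass_gaussianReal (μ := 0) one_ne_zero
  rw [← Set.compl_Iio, probReal_compl_eq_one_sub measurableSet_Iio,
    measureReal_congr Iio_ae_eq_Iic]
  rfl

lemma measureReal_gaussianReal_std_compl_Ioo_neg_self {x : ℝ} (hx : 0 < x) :
    (gaussianReal 0 1).real (Set.Ioo (-x) x)ᶜ = 2 * (1 - stdPhi x) := by
  have htails : (Set.Ioo (-x) x)ᶜ = Set.Iic (-x) ∪ Set.Ici x := by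
    ext z
    simp only [Set.mem_compl_iff, Set.mem_Ioo, Set.mem_union, Set.mem_Iic, Set.mem_Ici,
      not_and_or, not_lt]
  rw [htails, measureReal_union (Set.Iic_disjoint_Ici.2 (by linarith)) measurableSet_Ici,
    Measure.real, gaussianReal_std_Iic_neg, ← Measure.real, measureReal_gaussianReal_std_Ici]
  ring

lemma measureReal_gaussianReal_std_Ioo_neg_self {x : ℝ} (hx : 0 < x) :
    (gaussianReal 0 1).real (Set.Ioo (-x) x) = 2 * stdPhi x - 1 := by
  have := probReal_compl_eq_one_sub (μ := gaussianReal 0 1) (measurableSet_Ioo (a := -x) (b := x))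
  rw [measureReal_gaussianReal_std_compl_Ioo_neg_self hx] at this
  linarith

lemma gaussianReal_Ioo_neg_self_eq_std {v : ℝ≥0} (hv : v ≠ 0) (t : ℝ) :
    gaussianReal 0 v (Set.Ioo (-t) t) = gaussianReal 0 1 (Set.Ioo (-(t / √v)) (t / √v)) := by
  have hc : 0 < √(v : ℝ) := sqrt_pos.2 (by positivity)
  have hscale : (gaussianReal 0 1).map (√(v : ℝ) * ·) = gaussianReal 0 v := by
    rw [gaussianReal_map_const_mul, mul_zero, mul_one]
    congr
    exact sq_sqrt v.2
  rw [← hscale, Measure.map_apply (by fun_prop) measurableSet_Ioo,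
    Set.preimage_const_mul_Ioo₀ _ _ hc, neg_div]

lemma measureReal_gaussianReal_eq_setIntegral {μ : ℝ} {v : ℝ≥0} (hv : v ≠ 0) (s : Set ℝ) :
    (gaussianReal μ v).real s = ∫ z in s, gaussianPDFReal μ v z := by
  rw [Measure.real, gaussianReal_apply_eq_integral μ hv,
    ENNReal.toReal_ofReal (setIntegral_nonneg_of_ae (.of_forall (gaussianPDFReal_nonneg μ v)))]

lemma gaussianPDFReal_std_mul_exp_sq {v : ℝ≥0} (hv : v ≠ 0) (z : ℝ) :
    gaussianPDFReal 0 1 z * exp (z ^ 2 * (1 - (v : ℝ)⁻¹) / 2) = √v * gaussianPDFReal 0 v z := by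
  have hv' : (0 : ℝ) < v := by positivity
  have hsqrt : √(2 * π * v) = √(2 * π) * √v := sqrt_mul (by positivity) _
  simp only [gaussianPDFReal, NNReal.coe_one, sub_zero, mul_one]
  rw [hsqrt, mul_assoc, ← exp_add]
  field_simp
  ring_nf

lemma setIntegral_gaussianReal_std_exp_sq {v : ℝ≥0} (hv : v ≠ 0) {s : Set ℝ}
    (hs : MeasurableSet s) :
    ∫ z in s, exp (z ^ 2 * (1 - (v : ℝ)⁻¹) / 2) ∂gaussianReal 0 1
      = √v * (gaussianReal 0 v).real s := by
  rw [gaussianReal_of_var_ne_zero 0 one_ne_zero,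
    setIntegral_withDensity_eq_setIntegral_toReal_smul (measurable_gaussianPDF 0 1)
      (.of_forall fun _ ↦ gaussianPDF_lt_top) _ hs,
    measureReal_gaussianReal_eq_setIntegral hv, ← integral_const_mul]
  simp only [toReal_gaussianPDF, smul_eq_mul, gaussianPDFReal_std_mul_exp_sq hv]

lemma setIntegral_Ioo_exp_neg_max_sub_sq {η b : ℝ} (hη : 0 < η) (hb : 0 < b) :
    ∫ z in Set.Ioo (-√(2 * (1 + η) * b)) √(2 * (1 + η) * b),
        exp (-(max (b - z ^ 2 / (2 * (1 + η))) 0)) ∂gaussianReal 0 1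
      = exp (-b) * √((1 + η) / η) * (2 * stdPhi (√(2 * η * b)) - 1) := by
  set t := √(2 * (1 + η) * b)
  set v : ℝ≥0 := ((1 + η) / η).toNNReal
  have hv_coe : (v : ℝ) = (1 + η) / η := coe_toNNReal _ (by positivity)
  have hv : v ≠ 0 := by rw [← NNReal.coe_ne_zero, hv_coe]; positivity
  have ht_sq : t ^ 2 = 2 * (1 + η) * b := sq_sqrt (by positivity)
  have ht_div : t / √v = √(2 * η * b) := by
    rw [hv_coe, ← sqrt_div (by positivity)]
    congr 1
    field_simp
  rw [setIntegral_congr_fun measurableSet_Ioo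
      (g := fun z ↦ exp (-b) * exp (z ^ 2 * (1 - (v : ℝ)⁻¹) / 2)) fun z hz ↦ ?_,
    integral_const_mul, setIntegral_gaussianReal_std_exp_sq hv measurableSet_Ioo, Measure.real,
    gaussianReal_Ioo_neg_self_eq_std hv, ← Measure.real,
    measureReal_gaussianReal_std_Ioo_neg_self (by positivity), ht_div, hv_coe, ← mul_assoc]
  have hz_sq : z ^ 2 < t ^ 2 := sq_lt_sq' hz.1 hz.2
  have hpos : 0 ≤ b - z ^ 2 / (2 * (1 + η)) := by
    rw [sub_nonneg, div_le_iff₀ (by positivity)]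
    nlinarith
  rw [max_eq_left hpos]
  dsimp only
  rw [← exp_add, hv_coe]
  congr 1
  field_simp
  ring

lemma setIntegral_compl_Ioo_exp_neg_max_sub_sq {η b : ℝ} (hη : 0 < 1 + η) (hb : 0 < b) :
    ∫ z in (Set.Ioo (-√(2 * (1 + η) * b)) √(2 * (1 + η) * b))ᶜ,
        exp (-(max (b - z ^ 2 / (2 * (1 + η))) 0)) ∂gaussianReal 0 1
      = 2 * (1 - stdPhi (√(2 * (1 + η) * b))) := by
  set t := √(2 * (1 + η) * b)
  have ht : 0 < t := sqrt_pos.2 (by positivity)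
  have ht_sq : t ^ 2 = 2 * (1 + η) * b := sq_sqrt (by positivity)
  rw [setIntegral_congr_fun measurableSet_Ioo.compl (g := fun _ ↦ 1) fun z hz ↦ ?_,
    setIntegral_const, smul_eq_mul, mul_one, measureReal_gaussianReal_std_compl_Ioo_neg_self ht]
  rw [Set.mem_compl_iff, Set.mem_Ioo, ← abs_lt, not_lt] at hz
  have hz_sq : t ^ 2 ≤ z ^ 2 := sq_abs z ▸ pow_le_pow_left₀ ht.le hz 2
  have hnonpos : b - z ^ 2 / (2 * (1 + η)) ≤ 0 := by
    rw [sub_nonpos, le_div_iff₀ (by linarith)]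
    nlinarith
  simp [max_eq_right hnonpos]

lemma integral_exp_neg_max_sub_sq_gaussianReal_std {η b : ℝ} (hη : 0 < η) (hb : 0 < b) :
    ∫ z, exp (-(max (b - z ^ 2 / (2 * (1 + η))) 0)) ∂gaussianReal 0 1
      = exp (-b) * √((1 + η) / η) * (2 * stdPhi (√(2 * η * b)) - 1)
        + 2 * (1 - stdPhi (√(2 * (1 + η) * b))) := by
  have hint : Integrable (fun z ↦ exp (-(max (b - z ^ 2 / (2 * (1 + η))) 0)))
      (gaussianReal 0 1) := by
    refine .of_bound (by fun_prop) 1 (.of_forall fun z ↦ ?_)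
    rw [norm_of_nonneg (exp_pos _).le, exp_le_one_iff, neg_nonpos]
    exact le_max_right _ _
  rw [← integral_add_compl measurableSet_Ioo hint, setIntegral_Ioo_exp_neg_max_sub_sq hη hb,
    setIntegral_compl_Ioo_exp_neg_max_sub_sq (by linarith) hb]

lemma cEta_pos {η : ℝ} (hη : 0 < η) : 0 < cEta η :=
  mul_pos one_half_pos (log_pos ((one_lt_div hη).2 (by linarith)))

lemma exp_cEta {η : ℝ} (hη : 0 < η) : exp (cEta η) = √((1 + η) / η) := by
  rw [cEta, sqrt_eq_rpow, rpow_def_of_pos (by positivity), mul_comm]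

/-- For `η > 0` and all `a > 0`,
`h_{2,η}(a) = e^{−a}·(2Φ(√(2η(a + c_η))) − 1) + 2·(1 − Φ(√(2(1+η)(a + c_η))))`. -/
theorem h2_eq (η a : ℝ) (hη : 0 < η) (ha : 0 < a) :
    h2 η a = Real.exp (-a) * (2 * stdPhi (Real.sqrt (2*η*(a + cEta η))) - 1)
      + 2 * (1 - stdPhi (Real.sqrt (2*(1+η)*(a + cEta η)))) := by
  have hexp : exp (-(a + cEta η)) * √((1 + η) / η) = exp (-a) := by
    rw [← exp_cEta hη, ← exp_add]
    ring_nf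
  rw [h2, integral_exp_neg_max_sub_sq_gaussianReal_std hη (add_pos ha (cEta_pos hη)), hexp]
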